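/- arXiv:1009.5696 — 3 statements merged into one kernel-verified Lean document; each statement's English description precedes it below -/
import Mathlib

section
/- The function f : ℝⁿ → ℝ given by f(x₁,…,xₙ) = ∏ᵢ max(xᵢ, 0) is increasing and directionally convex: it is monotone nondecreasing in each coordinate, and for all p,x,y,q ∈ ℝⁿ with p ≤ x ≤ q, p ≤ y ≤ q componentwise and x + y = p + q, one has f(x) + f(y) ≤ f(p) + f(q). -/
private lemma pos_part_dcx {p x y q : ℝ} (h1 : p ≤ x) (h2 : x ≤ q) (h3 : p ≤ y)
    (hsum : x + y = p + q) : max x 0 + max y 0 ≤ max p 0 + max q 0 := by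
  simp only [max_def]
  split_ifs <;> linarith

private lemma key_scalar {a b c d A B C D : ℝ} (ha : 0 ≤ a) (hab : a ≤ b) (hcb : c ≤ b)
    (hac : a ≤ c) (hbd : b ≤ d) (hsum : b + c ≤ a + d)
    (hA : 0 ≤ A) (hAB : A ≤ B) (hAC : A ≤ C) (hBD : B ≤ D) (hCD : C ≤ D)
    (hSum : B + C ≤ A + D) :
    b * B + c * C ≤ a * A + d * D := by
  have h1 : (c - a) * A ≤ (d - b) * D :=
    mul_le_mul (by linarith) (hAC.trans hCD) hA (by linarith)
  have h2 : c * (C - A) ≤ b * (D - B) := by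
    rcases le_total C A with h | h
    · have : c * (C - A) ≤ 0 := mul_nonpos_of_nonneg_of_nonpos (ha.trans hac) (by linarith)
      have : 0 ≤ b * (D - B) := mul_nonneg (ha.trans hab) (by linarith)
      linarith
    · exact mul_le_mul hcb (by linarith) (by linarith) (ha.trans hab)
  nlinarith [h1, h2]

private lemma prod_pos_part_dcx : ∀ (n : ℕ) (p x y q : Fin n → ℝ), p ≤ x → x ≤ q → p ≤ y →
    y ≤ q → x + y = p + q →
    (∏ i, max (x i) 0) + ∏ i, max (y i) 0 ≤ (∏ i, max (p i) 0) + ∏ i, max (q i) 0 := by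
  intro n
  induction n with
  | zero => intro p x y q _ _ _ _ _; simp
  | succ n ih =>
    -- symmetric core: handles the case max (y 0) 0 ≤ max (x 0) 0
    have core : ∀ p x y q : Fin (n+1) → ℝ, p ≤ x → x ≤ q → p ≤ y → y ≤ q →
        x + y = p + q → max (y 0) 0 ≤ max (x 0) 0 →
        (∏ i, max (x i) 0) + ∏ i, max (y i) 0
          ≤ (∏ i, max (p i) 0) + ∏ i, max (q i) 0 := by
      intro p x y q hpx hxq hpy hyq hsum hbc
      have hsum' : ∀ i, x i + y i = p i + q i := fun i => congrFun hsum i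
      rw [Fin.prod_univ_succ, Fin.prod_univ_succ, Fin.prod_univ_succ, Fin.prod_univ_succ]
      set A := ∏ i : Fin n, max (p i.succ) 0 with hAdef
      set B := ∏ i : Fin n, max (x i.succ) 0 with hBdef
      set C := ∏ i : Fin n, max (y i.succ) 0 with hCdef
      set D := ∏ i : Fin n, max (q i.succ) 0 with hDdef
      have hA : 0 ≤ A := Finset.prod_nonneg fun i _ => le_max_right _ _
      have hmono : ∀ u v : Fin (n+1) → ℝ, u ≤ v →
          (∏ i : Fin n, max (u i.succ) 0) ≤ ∏ i : Fin n, max (v i.succ) 0 := by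
        intro u v huv
        exact Finset.prod_le_prod (fun i _ => le_max_right _ _)
          (fun i _ => max_le_max (huv i.succ) le_rfl)
      have hSum : B + C ≤ A + D := by
        apply ih (fun i => p i.succ) (fun i => x i.succ) (fun i => y i.succ)
          (fun i => q i.succ) (fun i => hpx i.succ) (fun i => hxq i.succ)
          (fun i => hpy i.succ) (fun i => hyq i.succ)
        funext i; exact hsum' i.succ
      exact key_scalar (le_max_right _ _) (max_le_max (hpx 0) le_rfl) hbc
        (max_le_max (hpy 0) le_rfl) (max_le_max (hxq 0) le_rfl)
        (pos_part_dcx (hpx 0) (hxq 0) (hpy 0) (hsum' 0))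
        hA (hmono p x hpx) (hmono p y hpy) (hmono x q hxq) (hmono y q hyq) hSum
    intro p x y q hpx hxq hpy hyq hsum
    rcases le_total (max (y 0) 0) (max (x 0) 0) with h | h
    · exact core p x y q hpx hxq hpy hyq hsum h
    · have := core p y x q hpy hyq hpx hxq (by rw [← hsum]; ring) h
      linarith

/-- f(x) = ∏ max(xᵢ,0) is increasing and directionally convex. -/
theorem prod_pos_part_idcx (n : ℕ) (f : (Fin n → ℝ) → ℝ)
    (hf : ∀ x, f x = ∏ i, max (x i) 0) :
    Monotone f ∧
      ∀ p x y q : Fin n → ℝ, p ≤ x → x ≤ q → p ≤ y → y ≤ q → x + y = p + q →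
        f x + f y ≤ f p + f q := by
  constructor
  · intro u v huv
    rw [hf, hf]
    exact Finset.prod_le_prod (fun i _ => le_max_right _ _)
      (fun i _ => max_le_max (huv i) le_rfl)
  · intro p x y q hpx hxq hpy hyq hsum
    rw [hf, hf, hf, hf]
    exact prod_pos_part_dcx n p x y q hpx hxq hpy hyq hsum
end

section
/- Let N ~ Binomial(n, λ/n) with λ > 0 and n ≥ λ, and let M ~ Poisson(λ). Then N is convexly smaller than M: E[f(N)] ≤ E[f(M)] for every convex function f : ℝ → ℝ for which both expectations are finite. -/
/-!
The ratio of the Binomial(n, λ/n) to the Poisson(λ) weights gets multiplied by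
`(n - k) / (n - λ)` from `k` to `k + 1`, so it increases up to `λ` and decreases afterwards.
Hence the binomial weights exceed the Poisson ones exactly on an interval of integers: the two
laws, which have the same mass and the same mean, differ by a signed measure with sign
pattern `+, -, +`. Subtracting from a convex `f` its secant line over a slightly larger interval
gives a function with the same sign pattern, whose integral against the difference is therefore
nonnegative, while the secant line itself integrates to the same value under both laws
(the cut criterion of Karlin and Novikoff).
-/

open MeasureTheory Set Finset

section Secant

variable {f : ℝ → ℝ} {a c x : ℝ}

lemma ConvexOn.le_secant_of_mem_Icc (hf : ConvexOn ℝ univ f) (hx : x ∈ Icc a c) :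
    f x ≤ f a + slope f a c * (x - a) := by
  rcases hx.1.eq_or_lt with rfl | hax
  · simp
  have hslope := hf.slope_mono (mem_univ a) ⟨mem_univ x, hax.ne'⟩
    ⟨mem_univ c, (hax.trans_le hx.2).ne'⟩ hx.2
  have hfx : (x - a) * slope f a x = f x - f a := sub_smul_slope f a x
  nlinarith

lemma ConvexOn.secant_le_of_notMem_Ioo (hf : ConvexOn ℝ univ f) (hac : a < c)
    (hx : x ∉ Ioo a c) : f a + slope f a c * (x - a) ≤ f x := by
  have hfx : (x - a) * slope f a x = f x - f a := sub_smul_slope f a x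
  rcases lt_trichotomy x a with hxa | rfl | hax
  · have := hf.slope_mono (mem_univ a) ⟨mem_univ x, hxa.ne⟩ ⟨mem_univ c, hac.ne'⟩
      (hxa.trans hac).le
    nlinarith
  · simp
  · have hcx : c ≤ x := not_lt.1 fun hxc => hx ⟨hax, hxc⟩
    have := hf.slope_mono (mem_univ a) ⟨mem_univ c, hac.ne'⟩ ⟨mem_univ x, hax.ne'⟩ hcx
    nlinarith

end Secant

theorem ConvexOn.le_of_hasSum_of_sign_pattern {ι : Type*} {x P Q : ι → ℝ} {f : ℝ → ℝ}
    (hf : ConvexOn ℝ univ f) {m₀ m₁ I J a c : ℝ} (hac : a < c)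
    (hP : HasSum P m₀) (hQ : HasSum Q m₀)
    (hxP : HasSum (fun i => x i * P i) m₁) (hxQ : HasSum (fun i => x i * Q i) m₁)
    (hPf : HasSum (fun i => P i * f (x i)) I) (hQf : HasSum (fun i => Q i * f (x i)) J)
    (hin : ∀ i, x i ∈ Ioo a c → Q i ≤ P i) (hout : ∀ i, x i ∉ Icc a c → P i ≤ Q i) :
    I ≤ J := by
  set L : ℝ → ℝ := fun y => f a + slope f a c * (y - a)
  have hL : ∀ R : ι → ℝ, HasSum R m₀ → HasSum (fun i => x i * R i) m₁ →
      HasSum (fun i => R i * L (x i)) ((f a - slope f a c * a) * m₀ + slope f a c * m₁) := by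
    intro R h₀ h₁
    exact ((h₀.mul_left _).add (h₁.mul_left _)).congr_fun fun i => by ring
  have hsum := (hQf.sub (hL Q hQ hxQ)).sub (hPf.sub (hL P hP hxP))
  -- `f - L` is `≤ 0` on `[a, c]` and `≥ 0` off `(a, c)`, so it has the sign of `Q - P`.
  suffices hterm : ∀ i, 0 ≤ Q i * f (x i) - Q i * L (x i) - (P i * f (x i) - P i * L (x i)) by
    linarith [hsum.nonneg hterm]
  intro i
  rw [show Q i * f (x i) - Q i * L (x i) - (P i * f (x i) - P i * L (x i)) =
    (Q i - P i) * (f (x i) - L (x i)) by ring]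
  have hlow (h : x i ∉ Ioo a c) := sub_nonneg.2 (hf.secant_le_of_notMem_Ioo hac h)
  by_cases hIoo : x i ∈ Ioo a c
  · exact mul_nonneg_of_nonpos_of_nonpos (sub_nonpos.2 (hin i hIoo))
      (sub_nonpos.2 (hf.le_secant_of_mem_Icc (Ioo_subset_Icc_self hIoo)))
  by_cases hIcc : x i ∈ Icc a c
  · rw [le_antisymm (sub_nonpos.2 (hf.le_secant_of_mem_Icc hIcc)) (hlow hIoo), mul_zero]
  · exact mul_nonneg (sub_nonneg.2 (hout i hIcc)) (hlow hIoo)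

lemma exists_sign_pattern_of_finite {P Q : ℕ → ℝ} (hfin : {k | Q k < P k}.Finite)
    (hconn : ∀ {j k l : ℕ}, j ≤ k → k ≤ l → Q j < P j → Q l < P l → Q k ≤ P k) :
    ∃ a c : ℝ, a < c ∧ (∀ k : ℕ, (k : ℝ) ∈ Ioo a c → Q k ≤ P k) ∧
      ∀ k : ℕ, (k : ℝ) ∉ Icc a c → P k ≤ Q k := by
  rcases hfin.toFinset.eq_empty_or_nonempty with hT | hT
  · refine ⟨-1, 0, by norm_num, fun k hk => absurd hk.2 (not_lt.2 k.cast_nonneg), fun k _ => ?_⟩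
    exact not_lt.1 fun hk => by simpa [hT] using hfin.mem_toFinset.2 hk
  set j := hfin.toFinset.min' hT
  set l := hfin.toFinset.max' hT
  have hj : Q j < P j := hfin.mem_toFinset.1 (min'_mem _ hT)
  have hl : Q l < P l := hfin.mem_toFinset.1 (max'_mem _ hT)
  have hjl : (j : ℝ) ≤ l := by exact_mod_cast min'_le_max' _ hT
  refine ⟨j - 1, l + 1, by linarith, fun k hk => ?_, fun k hk => not_lt.1 fun hlt => hk ?_⟩
  · have hjk : j < k + 1 := by exact_mod_cast (by linarith [hk.1] : (j : ℝ) < k + 1)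
    have hkl : k < l + 1 := by exact_mod_cast hk.2
    exact hconn (by omega) (by omega) hj hl
  · have hjk : (j : ℝ) ≤ k := by exact_mod_cast min'_le _ k (hfin.mem_toFinset.2 hlt)
    have hkl : (k : ℝ) ≤ l := by exact_mod_cast le_max' _ k (hfin.mem_toFinset.2 hlt)
    constructor <;> linarith

lemma min_le_of_unimodal {α : Type*} [LinearOrder α] {r : ℕ → α} {m : ℕ}
    (hup : ∀ i < m, r i ≤ r (i + 1)) (hdown : ∀ i ≥ m, r (i + 1) ≤ r i)
    {j k l : ℕ} (hjk : j ≤ k) (hkl : k ≤ l) : min (r j) (r l) ≤ r k := by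
  rcases le_total k m with hkm | hmk
  · refine min_le_of_left_le ?_
    induction k, hjk using Nat.le_induction with
    | base => exact le_rfl
    | succ i _ ih => exact (ih (by omega) (by omega)).trans (hup i (by omega))
  · exact min_le_of_right_le (antitoneOn_nat_Ici_of_succ_le hdown hmk (hmk.trans hkl) hkl)

theorem hasSum_integral_comp_of_measure_fiber_eq
    {Ω α E : Type*} {mΩ : MeasurableSpace Ω} [MeasurableSpace α] [Countable α]
    [MeasurableSingletonClass α] [NormedAddCommGroup E] [NormedSpace ℝ E] [CompleteSpace E]
    {μ : Measure Ω} {X : Ω → α} (hX : Measurable X) {P : α → ℝ} (hP : ∀ k, 0 ≤ P k)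
    (hlaw : ∀ k, μ {ω | X ω = k} = ENNReal.ofReal (P k)) {g : α → E}
    (hg : Integrable (fun ω => g (X ω)) μ) :
    HasSum (fun k => P k • g k) (∫ ω, g (X ω) ∂μ) := by
  have hmap : μ.map X = Measure.sum fun k => ENNReal.ofReal (P k) • Measure.dirac k := by
    conv_lhs => rw [← Measure.sum_smul_dirac (μ.map X)]
    congr! 3 with k
    rw [Measure.map_apply hX (measurableSet_singleton k)]
    exact hlaw k
  have hg' : Integrable g (μ.map X) :=
    (integrable_map_measure .of_discrete hX.aemeasurable).2 hg
  rw [hmap] at hg'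
  rw [← integral_map hX.aemeasurable .of_discrete, hmap]
  simpa [ENNReal.toReal_ofReal (hP _)] using
    hasSum_integral_sum_dirac (fun k => ENNReal.ofReal_ne_top) hg'.summable_of_dirac

noncomputable def binomialWeight (p : ℝ) (n k : ℕ) : ℝ :=
  n.choose k * p ^ k * (1 - p) ^ (n - k)

noncomputable def poissonWeight (lam : ℝ) (k : ℕ) : ℝ :=
  Real.exp (-lam) * lam ^ k / k.factorial

section Binomial

variable {p : ℝ} {n k : ℕ}

lemma binomialWeight_eq_eval_bernsteinPolynomial :
    binomialWeight p n k = (bernsteinPolynomial ℝ n k).eval p := by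
  simp [binomialWeight, bernsteinPolynomial]

lemma binomialWeight_of_lt (h : n < k) : binomialWeight p n k = 0 := by
  simp [binomialWeight, Nat.choose_eq_zero_of_lt h]

lemma binomialWeight_nonneg (hp₀ : 0 ≤ p) (hp₁ : p ≤ 1) : 0 ≤ binomialWeight p n k := by
  have : 0 ≤ 1 - p := sub_nonneg.2 hp₁
  unfold binomialWeight
  positivity

lemma hasSum_of_support_subset_range {M : Type*} [AddCommMonoid M] [TopologicalSpace M]
    {g : ℕ → M} (hg : ∀ k, n < k → g k = 0) :
    HasSum g (∑ k ∈ range (n + 1), g k) :=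
  hasSum_sum_of_ne_finset_zero fun k hk => hg k (by simpa using hk)

lemma hasSum_binomialWeight (p : ℝ) (n : ℕ) : HasSum (binomialWeight p n) 1 := by
  convert hasSum_of_support_subset_range (n := n) fun k => binomialWeight_of_lt
  simpa [binomialWeight_eq_eval_bernsteinPolynomial, Polynomial.eval_finsetSum] using
    (congrArg (Polynomial.eval p) (bernsteinPolynomial.sum ℝ n)).symm

lemma hasSum_mul_binomialWeight (p : ℝ) (n : ℕ) :
    HasSum (fun k => k * binomialWeight p n k) (n * p) := by
  convert hasSum_of_support_subset_range (g := fun k => k * binomialWeight p n k)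
    fun k hk => by rw [binomialWeight_of_lt hk, mul_zero]
  simpa [binomialWeight_eq_eval_bernsteinPolynomial, Polynomial.eval_finsetSum] using
    (congrArg (Polynomial.eval p) (bernsteinPolynomial.sum_smul ℝ n)).symm

end Binomial

section Poisson

variable {lam : ℝ}

lemma poissonWeight_pos (hlam : 0 < lam) (k : ℕ) : 0 < poissonWeight lam k := by
  unfold poissonWeight
  positivity

lemma hasSum_poissonWeight (lam : ℝ) : HasSum (poissonWeight lam) 1 := by
  have h := (NormedSpace.expSeries_div_hasSum_exp lam).mul_left (Real.exp (-lam))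
  rw [← Real.exp_eq_exp_ℝ, ← Real.exp_add, neg_add_cancel, Real.exp_zero] at h
  have hw : poissonWeight lam = fun k => Real.exp (-lam) * (lam ^ k / k.factorial) :=
    funext fun k => mul_div_assoc _ _ _
  rw [hw]
  exact h

lemma succ_mul_poissonWeight_succ (lam : ℝ) (k : ℕ) :
    (k + 1) * poissonWeight lam (k + 1) = lam * poissonWeight lam k := by
  simp only [poissonWeight, pow_succ, Nat.factorial_succ, Nat.cast_mul, Nat.cast_succ]
  field_simp

lemma hasSum_mul_poissonWeight (lam : ℝ) :
    HasSum (fun k => k * poissonWeight lam k) lam := by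
  rw [← hasSum_nat_add_iff' 1]
  simpa [succ_mul_poissonWeight_succ] using (hasSum_poissonWeight lam).mul_left lam

end Poisson

section Ratio

variable {lam : ℝ} {n : ℕ}

lemma binomialWeight_succ_mul_poissonWeight (k : ℕ) :
    binomialWeight (lam / n) n (k + 1) * poissonWeight lam k * (n - lam) =
      binomialWeight (lam / n) n k * poissonWeight lam (k + 1) * (n - k) := by
  rcases lt_trichotomy k n with hkn | rfl | hnk
  · have hn : (n : ℝ) ≠ 0 := Nat.cast_ne_zero.2 (by omega)
    have hchoose : (n.choose (k + 1) : ℝ) * (k + 1) = n.choose k * (n - k) := by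
      have := congrArg (Nat.cast (R := ℝ)) (Nat.choose_succ_right_eq n k)
      push_cast [Nat.cast_sub hkn.le] at this
      exact this
    obtain ⟨m, hm⟩ : ∃ m, n - k = m + 1 := ⟨n - (k + 1), by omega⟩
    have hm' : n - (k + 1) = m := by omega
    have hxy : lam / n * (n - lam) = lam * (1 - lam / n) := by field_simp
    simp only [binomialWeight, poissonWeight, hm, hm', pow_succ, Nat.factorial_succ, Nat.cast_mul,
      Nat.cast_succ]
    generalize lam / n = x at *
    generalize 1 - x = y at *
    field_simp
    linear_combination (x ^ k * y ^ m * lam ^ k * lam * y) * hchoose +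
      (x ^ k * y ^ m * lam ^ k * n.choose (k + 1) * (k + 1)) * hxy
  · simp [binomialWeight_of_lt (Nat.lt_succ_self k)]
  · simp [binomialWeight_of_lt hnk, binomialWeight_of_lt (hnk.trans (Nat.lt_succ_self k))]

noncomputable def binomialPoissonRatio (lam : ℝ) (n k : ℕ) : ℝ :=
  binomialWeight (lam / n) n k / poissonWeight lam k

lemma binomialPoissonRatio_succ_mul (hlam : 0 < lam) (k : ℕ) :
    binomialPoissonRatio lam n (k + 1) * (n - lam) = binomialPoissonRatio lam n k * (n - k) := by
  have := (poissonWeight_pos hlam k).ne'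
  have := (poissonWeight_pos hlam (k + 1)).ne'
  unfold binomialPoissonRatio
  field_simp
  linear_combination binomialWeight_succ_mul_poissonWeight k

lemma binomialPoissonRatio_nonneg (hlam : 0 < lam) (hn : lam ≤ n) (k : ℕ) :
    0 ≤ binomialPoissonRatio lam n k :=
  div_nonneg (binomialWeight_nonneg (by positivity) (div_le_one_of_le₀ hn n.cast_nonneg))
    (poissonWeight_pos hlam k).le

lemma binomialPoissonRatio_le_succ (hlam : 0 < lam) (hn : lam ≤ n) {k : ℕ} (hk : (k : ℝ) < lam) :
    binomialPoissonRatio lam n k ≤ binomialPoissonRatio lam n (k + 1) := by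
  have hsucc := binomialPoissonRatio_succ_mul (n := n) hlam k
  have hr := binomialPoissonRatio_nonneg hlam hn k
  rcases hn.lt_or_eq with hn | hn
  · exact le_of_mul_le_mul_right (by nlinarith) (sub_pos.2 hn)
  · subst hn
    rw [sub_self, mul_zero] at hsucc
    rw [(mul_eq_zero.1 hsucc.symm).resolve_right (sub_pos.2 hk).ne']
    exact binomialPoissonRatio_nonneg hlam le_rfl _

lemma binomialPoissonRatio_succ_le (hlam : 0 < lam) (hn : lam ≤ n) {k : ℕ} (hk : lam ≤ k) :
    binomialPoissonRatio lam n (k + 1) ≤ binomialPoissonRatio lam n k := by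
  rcases hn.lt_or_eq with hn' | hn'
  · have hsucc := binomialPoissonRatio_succ_mul (n := n) hlam k
    have hr := binomialPoissonRatio_nonneg hlam hn k
    exact le_of_mul_le_mul_right (by nlinarith) (sub_pos.2 hn')
  · have hnk : n < k + 1 := by exact_mod_cast (hn'.symm.trans_le hk).trans_lt (lt_add_one _)
    rw [binomialPoissonRatio, binomialWeight_of_lt hnk, zero_div]
    exact binomialPoissonRatio_nonneg hlam hn k

lemma poissonWeight_le_binomialWeight_of_le_of_le (hlam : 0 < lam) (hn : lam ≤ n)
    {j k l : ℕ} (hjk : j ≤ k) (hkl : k ≤ l)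
    (hj : poissonWeight lam j < binomialWeight (lam / n) n j)
    (hl : poissonWeight lam l < binomialWeight (lam / n) n l) :
    poissonWeight lam k ≤ binomialWeight (lam / n) n k := by
  have hmin := min_le_of_unimodal (r := binomialPoissonRatio lam n) (m := ⌈lam⌉₊)
    (fun i hi => binomialPoissonRatio_le_succ hlam hn (Nat.lt_ceil.1 hi))
    (fun i hi => binomialPoissonRatio_succ_le hlam hn (Nat.ceil_le.1 hi)) hjk hkl
  have hone : ∀ i, poissonWeight lam i < binomialWeight (lam / n) n i →
      1 < binomialPoissonRatio lam n i := fun i hi => (one_lt_div (poissonWeight_pos hlam i)).2 hi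
  exact ((one_lt_div (poissonWeight_pos hlam k)).1
    ((lt_min (hone j hj) (hone l hl)).trans_le hmin)).le

end Ratio

theorem binomial_cx_le_poisson_general {Ω : Type*} {mΩ : MeasurableSpace Ω}
    (μ : Measure Ω)
    (lam : ℝ) (hlam : 0 < lam) (n : ℕ) (hn : lam ≤ n)
    (N M : Ω → ℕ) (hN : Measurable N) (hM : Measurable M)
    (hNdist : ∀ k : ℕ,
      μ {ω | N ω = k} = ENNReal.ofReal
        ((n.choose k : ℝ) * (lam / n) ^ k * (1 - lam / n) ^ (n - k)))
    (hMdist : ∀ k : ℕ,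
      μ {ω | M ω = k} = ENNReal.ofReal (Real.exp (-lam) * lam ^ k / k.factorial)) :
    ∀ f : ℝ → ℝ, ConvexOn ℝ Set.univ f →
      Integrable (fun ω => f (N ω)) μ → Integrable (fun ω => f (M ω)) μ →
      ∫ ω, f (N ω) ∂μ ≤ ∫ ω, f (M ω) ∂μ := by
  intro f hf hNf hMf
  have hp₀ : 0 ≤ lam / n := by positivity
  have hp₁ : lam / n ≤ 1 := div_le_one_of_le₀ hn n.cast_nonneg
  have hNmean : HasSum (fun k => k * binomialWeight (lam / n) n k) lam := by
    convert hasSum_mul_binomialWeight (lam / n) n using 1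
    exact (mul_div_cancel₀ lam (hlam.trans_le hn).ne').symm
  have hfin : {k | poissonWeight lam k < binomialWeight (lam / n) n k}.Finite :=
    (Set.finite_Iic n).subset fun k hk => not_lt.1 fun hnk =>
      (hk.trans_eq (binomialWeight_of_lt hnk)).not_ge (poissonWeight_pos hlam k).le
  obtain ⟨a, c, hac, hin, hout⟩ :=
    exists_sign_pattern_of_finite hfin (poissonWeight_le_binomialWeight_of_le_of_le hlam hn)
  have hNsum := hasSum_integral_comp_of_measure_fiber_eq (g := fun k : ℕ => f k) hN
    (fun k => binomialWeight_nonneg hp₀ hp₁) hNdist hNf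
  have hMsum := hasSum_integral_comp_of_measure_fiber_eq (g := fun k : ℕ => f k) hM
    (fun k => (poissonWeight_pos hlam k).le) hMdist hMf
  exact hf.le_of_hasSum_of_sign_pattern hac (hasSum_binomialWeight _ n) (hasSum_poissonWeight lam)
    hNmean (hasSum_mul_poissonWeight lam) hNsum hMsum hin hout

/-- Binomial(n, λ/n) is convexly smaller than Poisson(λ). -/
theorem binomial_cx_le_poisson {Ω : Type*} {mΩ : MeasurableSpace Ω}
    (μ : Measure Ω) [IsProbabilityMeasure μ]
    (lam : ℝ) (hlam : 0 < lam) (n : ℕ) (hn : lam ≤ n)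
    (N M : Ω → ℕ) (hN : Measurable N) (hM : Measurable M)
    (hNdist : ∀ k : ℕ,
      μ {ω | N ω = k} = ENNReal.ofReal
        ((n.choose k : ℝ) * (lam / n) ^ k * (1 - lam / n) ^ (n - k)))
    (hMdist : ∀ k : ℕ,
      μ {ω | M ω = k} = ENNReal.ofReal (Real.exp (-lam) * lam ^ k / k.factorial)) :
    ∀ f : ℝ → ℝ, ConvexOn ℝ Set.univ f →
      Integrable (fun ω => f (N ω)) μ → Integrable (fun ω => f (M ω)) μ →
      ∫ ω, f (N ω) ∂μ ≤ ∫ ω, f (M ω) ∂μ :=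
  binomial_cx_le_poisson_general (mΩ := mΩ) μ lam hlam n hn N M hN hM hNdist hMdist
end

section
/- The family Binomial(n, 1/n), n ≥ 1, is convexly increasing in n: for every n ≥ 1 and every convex f : ℝ → ℝ, E[f(Binomial(n,1/n))] ≤ E[f(Binomial(n+1,1/(n+1)))], whenever both expectations are finite. -/
/-!
Let `p` and `q` be the laws of `Bin(n, 1/n)` and `Bin(n + 1, 1/(n + 1))`. Both have mass one and
mean one, and `p k ≤ q k` for every `k ∉ {1, 2}`: for `k = 0` this is the monotonicity of
`(1 - 1/n)^n`, a consequence of Bernoulli's inequality, and for `k ≥ 3` it follows from `k = 0`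
because `p k / p 0 = C(n, k) / (n - 1)^k ≤ C(n + 1, k) / n^k = q k / q 0`. Subtracting from a
convex `f` its secant through `1` and `2` leaves a function that vanishes at `1` and `2` and is
nonnegative at all other integers, so its expectation under `q` dominates the one under `p`; the
secant itself, being affine, has the same expectation under both laws.
-/
open MeasureTheory Finset Set

theorem ConvexOn.secant_le_of_notMem_Ioo_s8 {s : Set ℝ} {f : ℝ → ℝ} (hf : ConvexOn ℝ s f)
    {a b t : ℝ} (ha : a ∈ s) (hb : b ∈ s) (ht : t ∈ s) (hab : a < b) (hout : t ∉ Ioo a b) :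
    (b - t) * f a + (t - a) * f b ≤ (b - a) * f t := by
  rcases lt_trichotomy t a with hta | rfl | hat
  · linarith [hf.secant_mono_aux1 ht hb hta hab]
  · linarith
  · rcases (not_lt.1 fun htb => hout ⟨hat, htb⟩).eq_or_lt with rfl | hbt
    · linarith
    · linarith [hf.secant_mono_aux1 ha ht hab hbt]

/-- Karlin–Novikoff cut criterion: `f` minus its secant on `[a, b]` has the sign pattern of
`q - p`. -/
theorem ConvexOn.sum_mul_le_sum_mul_of_cut {ι : Type*} {I : Finset ι} {x p q : ι → ℝ}
    {s : Set ℝ} {f : ℝ → ℝ} (hf : ConvexOn ℝ s f) {a b : ℝ} (ha : a ∈ s) (hb : b ∈ s)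
    (hx : ∀ i ∈ I, x i ∈ s) (hab : a < b)
    (hmass : ∑ i ∈ I, p i = ∑ i ∈ I, q i) (hmean : ∑ i ∈ I, p i * x i = ∑ i ∈ I, q i * x i)
    (hout : ∀ i ∈ I, x i < a ∨ b < x i → p i ≤ q i)
    (hin : ∀ i ∈ I, x i ∈ Ioo a b → q i ≤ p i) :
    ∑ i ∈ I, p i * f (x i) ≤ ∑ i ∈ I, q i * f (x i) := by
  set g : ℝ → ℝ := fun t => (b - a) * f t - ((b - t) * f a + (t - a) * f b)
  have hterm : ∀ i ∈ I, 0 ≤ (q i - p i) * g (x i) := by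
    intro i hi
    by_cases hmem : x i ∈ Ioo a b
    · exact mul_nonneg_of_nonpos_of_nonpos (sub_nonpos.2 (hin i hi hmem))
        (sub_nonpos.2 (hf.secant_mono_aux1 ha hb hmem.1 hmem.2))
    have hg := sub_nonneg.2 (hf.secant_le_of_notMem_Ioo_s8 ha hb (hx i hi) hab hmem)
    by_cases hcut : x i < a ∨ b < x i
    · exact mul_nonneg (sub_nonneg.2 (hout i hi hcut)) hg
    have hend : x i = a ∨ x i = b := by
      rw [not_or, not_lt, not_lt] at hcut
      by_contra! hne
      exact hmem ⟨hcut.1.lt_of_ne hne.1.symm, hcut.2.lt_of_ne hne.2⟩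
    rcases hend with hend | hend <;> simp only [g, hend] <;> ring_nf <;> simp
  have hsum : ∑ i ∈ I, (q i - p i) * g (x i)
      = (b - a) * (∑ i ∈ I, q i * f (x i) - ∑ i ∈ I, p i * f (x i)) := by
    have hexpand : ∀ i ∈ I, (q i - p i) * g (x i) = (b - a) * (q i * f (x i) - p i * f (x i))
        + ((f b - f a) * (p i * x i - q i * x i) + (b * f a - a * f b) * (p i - q i)) := by
      intro i _; simp only [g]; ring
    rw [sum_congr rfl hexpand, sum_add_distrib, sum_add_distrib, ← mul_sum, ← mul_sum, ← mul_sum,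
      sum_sub_distrib, sum_sub_distrib, sum_sub_distrib, hmass, hmean]
    ring
  have hnonneg := sum_nonneg hterm
  rw [hsum] at hnonneg
  exact sub_nonneg.1 (nonneg_of_mul_nonneg_right hnonneg (sub_pos.2 hab))

theorem integral_comp_eq_sum_of_law {Ω : Type*} {mΩ : MeasurableSpace Ω} (μ : Measure Ω)
    {N : Ω → ℕ} (hN : Measurable N) {ρ : ℕ → ℝ} (hρ₀ : ∀ k, 0 ≤ ρ k)
    (hρ : ∀ k, μ {ω | N ω = k} = ENNReal.ofReal (ρ k)) {s : Finset ℕ} (hs : ∀ k ∉ s, ρ k = 0)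
    {g : ℕ → ℝ} (hg : Integrable (fun ω => g (N ω)) μ) :
    ∫ ω, g (N ω) ∂μ = ∑ k ∈ s, ρ k * g k := by
  have hgm : AEStronglyMeasurable g (μ.map N) := .of_discrete
  have hlaw (k : ℕ) : (μ.map N).real {k} = ρ k := by
    rw [measureReal_def, Measure.map_apply hN (measurableSet_singleton k)]
    exact (congrArg ENNReal.toReal (hρ k)).trans (ENNReal.toReal_ofReal (hρ₀ k))
  rw [← integral_map hN.aemeasurable hgm,
    integral_countable ((integrable_map_measure hgm hN.aemeasurable).2 hg),
    tsum_eq_sum (fun k hk => by rw [hlaw, hs k hk, zero_smul])]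
  simp_rw [hlaw, smul_eq_mul]

noncomputable def binomProb (m : ℕ) (x : ℝ) (k : ℕ) : ℝ :=
  m.choose k * x ^ k * (1 - x) ^ (m - k)

section binomProb

variable {m k : ℕ} {x : ℝ}

theorem binomProb_nonneg (h0 : 0 ≤ x) (h1 : x ≤ 1) : 0 ≤ binomProb m x k := by
  have : 0 ≤ 1 - x := sub_nonneg.2 h1
  unfold binomProb; positivity

theorem binomProb_eq_zero_of_lt (h : m < k) : binomProb m x k = 0 := by
  simp [binomProb, Nat.choose_eq_zero_of_lt h]

theorem binomProb_eq_eval_bernsteinPolynomial :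
    binomProb m x k = (bernsteinPolynomial ℝ m k).eval x := by
  simp [binomProb, bernsteinPolynomial]

theorem sum_binomProb {s : Finset ℕ} (hs : range (m + 1) ⊆ s) :
    ∑ k ∈ s, binomProb m x k = 1 := by
  rw [← sum_subset hs fun k _ hk => binomProb_eq_zero_of_lt (by simpa using hk)]
  simp_rw [binomProb_eq_eval_bernsteinPolynomial, ← Polynomial.eval_finsetSum,
    bernsteinPolynomial.sum, Polynomial.eval_one]

theorem sum_mul_binomProb {s : Finset ℕ} (hs : range (m + 1) ⊆ s) :
    ∑ k ∈ s, binomProb m x k * k = m * x := by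
  rw [← sum_subset hs fun k _ hk => by rw [binomProb_eq_zero_of_lt (by simpa using hk), zero_mul]]
  have := congrArg (Polynomial.eval x) (bernsteinPolynomial.sum_smul ℝ m)
  simpa [Polynomial.eval_finsetSum, binomProb_eq_eval_bernsteinPolynomial, mul_comm] using this

theorem one_sub_pow_mul_binomProb (m k : ℕ) (x : ℝ) :
    (1 - x) ^ k * binomProb m x k = m.choose k * x ^ k * binomProb m x 0 := by
  rcases lt_or_ge m k with h | h
  · simp [binomProb_eq_zero_of_lt h, Nat.choose_eq_zero_of_lt h]
  · simp only [binomProb, Nat.choose_zero_right, pow_zero, Nat.cast_one, one_mul, Nat.sub_zero]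
    rw [← pow_mul_pow_sub (1 - x) h]
    ring

end binomProb

theorem one_sub_pow_mul_one_add_mul_le_one {y : ℝ} (hy₀ : -1 ≤ y) (hy₁ : y ≤ 1) (m : ℕ) :
    (1 - y) ^ m * (1 + m * y) ≤ 1 := by
  calc (1 - y) ^ m * (1 + m * y) ≤ (1 - y) ^ m * (1 + y) ^ m :=
        mul_le_mul_of_nonneg_left (one_add_mul_le_pow (by linarith) m)
          (pow_nonneg (by linarith) m)
    _ = (1 - y ^ 2) ^ m := by rw [← mul_pow]; ring
    _ ≤ 1 := pow_le_one₀ (by nlinarith) (by nlinarith)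

theorem one_sub_inv_pow_le_succ {n : ℕ} (hn : n ≠ 0) :
    (1 - 1 / n : ℝ) ^ n ≤ (1 - 1 / (n + 1) : ℝ) ^ (n + 1) := by
  have hn₁ : (1 : ℝ) ≤ n := by exact_mod_cast Nat.one_le_iff_ne_zero.2 hn
  have hy : 1 / (n : ℝ) ^ 2 ≤ 1 := by rw [div_le_one (by positivity)]; nlinarith
  have hfactor : (1 - 1 / n : ℝ) = (1 - 1 / (n : ℝ) ^ 2) * (1 - 1 / (n + 1)) := by
    field_simp; ring
  have hbernoulli : (1 - 1 / (n : ℝ) ^ 2) ^ n ≤ 1 - 1 / (n + 1) := by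
    have h := one_sub_pow_mul_one_add_mul_le_one
      (by linarith [one_div_nonneg.2 (sq_nonneg (n : ℝ))]) hy n
    rw [← le_div_iff₀ (by positivity)] at h
    refine h.trans_eq ?_
    field_simp
    ring
  rw [hfactor, mul_pow, pow_succ' (1 - 1 / ((n : ℝ) + 1))]
  have hq : 0 ≤ 1 - 1 / ((n : ℝ) + 1) := by rw [sub_nonneg, div_le_one (by positivity)]; linarith
  exact mul_le_mul_of_nonneg_right hbernoulli (pow_nonneg hq n)

theorem add_one_sub_mul_pow_le {x : ℝ} (hx : 1 ≤ x) {k : ℕ} (hk : 3 ≤ k) :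
    (x + 1 - k) * x ^ k ≤ (x + 1) * (x - 1) ^ k := by
  induction k, hk using Nat.le_induction with
  | base => push_cast; nlinarith
  | succ k hk ih =>
    have hk1 : (1 : ℝ) ≤ k := by exact_mod_cast (by omega : 1 ≤ k)
    calc (x + 1 - (k + 1 : ℕ)) * x ^ (k + 1) = x * (x - k) * x ^ k := by push_cast; ring
      _ ≤ (x - 1) * (x + 1 - k) * x ^ k :=
          mul_le_mul_of_nonneg_right (by nlinarith) (pow_nonneg (by linarith) k)
      _ ≤ (x - 1) * ((x + 1) * (x - 1) ^ k) := by
          rw [mul_assoc]; exact mul_le_mul_of_nonneg_left ih (by linarith)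
      _ = (x + 1) * (x - 1) ^ (k + 1) := by ring

theorem sub_one_pow_mul_binomProb_inv {y : ℝ} (hy : y ≠ 0) (m k : ℕ) :
    (y - 1) ^ k * binomProb m (1 / y) k = m.choose k * binomProb m (1 / y) 0 := by
  have h := congrArg (y ^ k * ·) (one_sub_pow_mul_binomProb m k (1 / y))
  rw [← mul_assoc, ← mul_pow, mul_one_sub, mul_one_div_cancel hy] at h
  rw [h, one_div, inv_pow]
  field_simp

theorem binomProb_zero_le_succ {n : ℕ} (hn : n ≠ 0) :
    binomProb n (1 / n) 0 ≤ binomProb (n + 1) (1 / (n + 1)) 0 := by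
  simpa [binomProb] using one_sub_inv_pow_le_succ hn

theorem binomProb_le_succ_of_three_le {n k : ℕ} (hn : n ≠ 0) (hk : 3 ≤ k) :
    binomProb n (1 / n) k ≤ binomProb (n + 1) (1 / (n + 1)) k := by
  have hx : (1 : ℝ) ≤ n := by exact_mod_cast Nat.one_le_iff_ne_zero.2 hn
  rcases lt_or_ge n k with hnk | hkn
  · rw [binomProb_eq_zero_of_lt hnk]
    exact binomProb_nonneg (by positivity) (by rw [div_le_one (by positivity)]; linarith)
  have hp := sub_one_pow_mul_binomProb_inv (y := n) (by positivity) n k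
  have hq := sub_one_pow_mul_binomProb_inv (y := n + 1) (by positivity) (n + 1) k
  rw [add_sub_cancel_right] at hq
  have hchoose : ((n + 1).choose k : ℝ) * (n + 1 - k) = (n + 1) * n.choose k := by
    have h := congrArg (Nat.cast : ℕ → ℝ) (Nat.choose_mul_succ_eq n k)
    push_cast [Nat.cast_sub (by omega : k ≤ n + 1)] at h
    linarith
  have hkn' : (k : ℝ) ≤ n := by exact_mod_cast hkn
  have hD : 0 < ((n : ℝ) - 1) ^ k * (n ^ k * (n + 1 - k)) := by
    have : (1 : ℝ) < n := by exact_mod_cast (by omega : 1 < n)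
    have : 0 < (n : ℝ) + 1 - k := by linarith
    positivity
  refine le_of_mul_le_mul_left ?_ hD
  calc ((n : ℝ) - 1) ^ k * (n ^ k * (n + 1 - k)) * binomProb n (1 / n) k
      = (n + 1 - k) * n ^ k * (n.choose k * binomProb n (1 / n) 0) := by rw [← hp]; ring
    _ ≤ (n + 1) * (n - 1) ^ k * (n.choose k * binomProb (n + 1) (1 / (n + 1)) 0) :=
        mul_le_mul (add_one_sub_mul_pow_le hx hk) (by gcongr; exact binomProb_zero_le_succ hn)
          (mul_nonneg (by positivity)
            (binomProb_nonneg (by positivity) (by rw [div_le_one (by positivity)]; exact hx)))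
          (mul_nonneg (by positivity) (pow_nonneg (by linarith) k))
    _ = ((n : ℝ) - 1) ^ k * (n ^ k * (n + 1 - k)) * binomProb (n + 1) (1 / (n + 1)) k := by
        linear_combination (-((n : ℝ) - 1) ^ k * (n + 1 - k)) * hq
          - ((n : ℝ) - 1) ^ k * binomProb (n + 1) (1 / (n + 1)) 0 * hchoose

theorem binomial_cx_increasing_general {Ω : Type*} {mΩ : MeasurableSpace Ω}
    (μ : Measure Ω)
    (n : ℕ) (hn : 1 ≤ n)
    (N₁ N₂ : Ω → ℕ) (hN₁ : Measurable N₁) (hN₂ : Measurable N₂)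
    (hN₁dist : ∀ k : ℕ,
      μ {ω | N₁ ω = k} = ENNReal.ofReal
        ((n.choose k : ℝ) * (1 / n) ^ k * (1 - 1 / n) ^ (n - k)))
    (hN₂dist : ∀ k : ℕ,
      μ {ω | N₂ ω = k} = ENNReal.ofReal
        (((n + 1).choose k : ℝ) * (1 / (n + 1)) ^ k * (1 - 1 / (n + 1)) ^ (n + 1 - k))) :
    ∀ f : ℝ → ℝ, ConvexOn ℝ Set.univ f →
      Integrable (fun ω => f (N₁ ω)) μ → Integrable (fun ω => f (N₂ ω)) μ →
      ∫ ω, f (N₁ ω) ∂μ ≤ ∫ ω, f (N₂ ω) ∂μ := by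
  intro f hf hf₁ hf₂
  have hn₀ : n ≠ 0 := Nat.one_le_iff_ne_zero.1 hn
  have hp₁ : 1 / (n : ℝ) ≤ 1 := by rw [div_le_one (by positivity)]; exact_mod_cast hn
  have hq₁ : 1 / ((n : ℝ) + 1) ≤ 1 := by rw [div_le_one (by positivity)]; linarith
  have hsupp : range (n + 1) ⊆ range (n + 2) := range_subset_range.2 (by omega)
  have e₁ : ∫ ω, f (N₁ ω) ∂μ = ∑ k ∈ range (n + 2), binomProb n (1 / n) k * f k :=
    integral_comp_eq_sum_of_law μ hN₁ (s := range (n + 2)) (g := fun k => f k)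
      (fun k => binomProb_nonneg (by positivity) hp₁) hN₁dist
      (fun k hk => binomProb_eq_zero_of_lt (by rw [Finset.mem_range] at hk; omega)) hf₁
  have e₂ : ∫ ω, f (N₂ ω) ∂μ = ∑ k ∈ range (n + 2), binomProb (n + 1) (1 / (n + 1)) k * f k :=
    integral_comp_eq_sum_of_law μ hN₂ (s := range (n + 2)) (g := fun k => f k)
      (fun k => binomProb_nonneg (by positivity) hq₁) hN₂dist
      (fun k hk => binomProb_eq_zero_of_lt (by rw [Finset.mem_range] at hk; omega)) hf₂
  rw [e₁, e₂]
  refine hf.sum_mul_le_sum_mul_of_cut (a := 1) (b := 2) (mem_univ _) (mem_univ _)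
    (fun _ _ => mem_univ _) one_lt_two ?_ ?_ ?_ ?_
  · rw [sum_binomProb hsupp, sum_binomProb subset_rfl]
  · rw [sum_mul_binomProb hsupp, sum_mul_binomProb subset_rfl, Nat.cast_succ]
    field_simp
  · intro k _ hk
    norm_cast at hk
    rcases hk with hk | hk
    · rw [Nat.lt_one_iff.1 hk]
      exact binomProb_zero_le_succ hn₀
    · exact binomProb_le_succ_of_three_le hn₀ hk
  · rintro k _ ⟨h₁, h₂⟩
    norm_cast at h₁ h₂
    omega

/-- the family Binomial(n, 1/n) is convexly increasing in n. -/
theorem binomial_cx_increasing {Ω : Type*} {mΩ : MeasurableSpace Ω}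
    (μ : Measure Ω) [IsProbabilityMeasure μ]
    (n : ℕ) (hn : 1 ≤ n)
    (N₁ N₂ : Ω → ℕ) (hN₁ : Measurable N₁) (hN₂ : Measurable N₂)
    (hN₁dist : ∀ k : ℕ,
      μ {ω | N₁ ω = k} = ENNReal.ofReal
        ((n.choose k : ℝ) * (1 / n) ^ k * (1 - 1 / n) ^ (n - k)))
    (hN₂dist : ∀ k : ℕ,
      μ {ω | N₂ ω = k} = ENNReal.ofReal
        (((n + 1).choose k : ℝ) * (1 / (n + 1)) ^ k * (1 - 1 / (n + 1)) ^ (n + 1 - k))) :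
    ∀ f : ℝ → ℝ, ConvexOn ℝ Set.univ f →
      Integrable (fun ω => f (N₁ ω)) μ → Integrable (fun ω => f (N₂ ω)) μ →
      ∫ ω, f (N₁ ω) ∂μ ≤ ∫ ω, f (N₂ ω) ∂μ :=
  binomial_cx_increasing_general (mΩ := mΩ) μ n hn N₁ N₂ hN₁ hN₂ hN₁dist hN₂dist
end
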